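/- arXiv:2504.21162 — 3 statements merged into one kernel-verified Lean document; each statement's English description precedes it below -/
import Mathlib

section
/- With H, B and comatrix elements (u_{ij}), (v_{kl}) ⊆ H as above for two corepresentations U and V (so Δ(u_{ij}) = Σ_r u_{ir} ⊗ u_{rj} and similarly for v), the map S_{U,V}: (ζ_k ⊗ b) ⊗_B (ξ_i ⊗ a) ↦ Σ_j ξ_j ⊗ ζ_k ⊗ (u_{ji} ▷ b)a from (H_V ⊗ B) ⊗_B (H_U ⊗ B) to H_U ⊗ H_V ⊗ B intertwines the left B-actions: S_{U,V}(π_V(c)·x) = π_{U⊗V}(c)·S_{U,V}(x), where π_V(c)(ζ_k ⊗ b) = Σ_l ζ_l ⊗ (v_{lk} ▷ c)b and π_{U⊗V}(c)(ξ_i ⊗ ζ_k ⊗ a) = Σ_{j,l} ξ_j ⊗ ζ_l ⊗ ((u_{ji}v_{lk}) ▷ c)a. -/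
/-- In coordinates, `H_U ⊗ B` is modeled as `Fin nU → B`, the
left `B`-action `π_U(b)` has matrix `(u_{ij} ▷ b)` and the balanced map
`S_{U,V}` sends `(y, x)` (coordinates of `(ζ ⊗ b) ⊗_B (ξ ⊗ a)`) to
`(i,k) ↦ ∑_j (u_{ij} ▷ y_k) x_j`.  Then `S_{U,V}` intertwines the left
`B`-actions: `S_{U,V}(π_V(c)·y, x) = π_{U⊗V}(c)·S_{U,V}(y, x)`. -/
theorem stmt_5 {H B : Type*} [Ring H] [Ring B]
    (nU nV : ℕ) (u : Fin nU → Fin nU → H) (v : Fin nV → Fin nV → H)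
    (act : H → B → B)
    (hmod : ∀ (f g : H) (c : B), act (f * g) c = act f (act g c))
    (hadd : ∀ (f : H) (a b : B), act f (a + b) = act f a + act f b)
    (hma : ∀ (j i0 : Fin nU) (x y : B),
      act (u j i0) (x * y) = ∑ i, act (u j i) x * act (u i i0) y)
    (c : B) (y : Fin nV → B) (x : Fin nU → B) (i : Fin nU) (k : Fin nV) :
    -- S_{U,V} applied to (π_V(c) y) ⊗_B x …
    (∑ j, act (u i j) (∑ l, act (v k l) c * y l) * x j)
      -- … equals π_{U⊗V}(c) applied to S_{U,V}(y ⊗_B x):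
      = ∑ j, ∑ l, act (u i j * v k l) c *
          (∑ j2, act (u j j2) (y l) * x j2) := by
  have hsum : ∀ (f : H) (g : Fin nV → B),
      act f (∑ l, g l) = ∑ l, act f (g l) := fun f g =>
    map_sum (AddMonoidHom.mk' (act f) (hadd f)) g Finset.univ
  simp only [hsum, hma, hmod, Finset.sum_mul, Finset.mul_sum, mul_assoc]
  rw [Finset.sum_comm]
  conv_rhs => rw [Finset.sum_comm]
  refine Finset.sum_congr rfl fun l _ => ?_
  rw [Finset.sum_comm]
end

section
/- With notation as in the previous statement, the maps S satisfy associativity: S_{U⊗V,W} ∘ (id_{B_W} ⊗ S_{U,V}) = S_{U,V⊗W} ∘ (S_{V,W} ⊗ id_{B_U}) as maps (H_W ⊗ B) ⊗_B (H_V ⊗ B) ⊗_B (H_U ⊗ B) → H_U ⊗ H_V ⊗ H_W ⊗ B. -/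
theorem sum_rotate3 {M : Type*} [AddCommMonoid M] {a b c : ℕ}
    (f : Fin a → Fin b → Fin c → M) :
    (∑ i, ∑ j, ∑ k, f i j k) = ∑ k, ∑ j, ∑ i, f i j k := by
  rw [show (∑ i, ∑ j, ∑ k, f i j k) = ∑ i, ∑ k, ∑ j, f i j k from
    Finset.sum_congr rfl fun _ _ => Finset.sum_comm, Finset.sum_comm]
  exact Finset.sum_congr rfl fun _ _ => Finset.sum_comm

/-- Associativity of the maps `S`:
`S_{U⊗V,W} ∘ (id_{B_W} ⊗ S_{U,V}) = S_{U,V⊗W} ∘ (S_{V,W} ⊗ id_{B_U})` as maps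
`(H_W ⊗ B) ⊗_B (H_V ⊗ B) ⊗_B (H_U ⊗ B) → H_U ⊗ H_V ⊗ H_W ⊗ B`,
written in coordinates (`H_X ⊗ B` is modeled by coordinate vectors, and
`S_{U,V}(y,x)(i,k) = ∑_j (u_{ij} ▷ y_k) x_j`, the comatrix elements of
`U ⊗ V` being `u_{i i'} v_{j j'}`). -/
theorem stmt_6 {H B : Type*} [Ring H] [Ring B]
    (nU nV nW : ℕ)
    (u : Fin nU → Fin nU → H) (v : Fin nV → Fin nV → H)
    (w : Fin nW → Fin nW → H)
    (act : H → B → B)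
    (hmod : ∀ (f g : H) (c : B), act (f * g) c = act f (act g c))
    (hadd : ∀ (f : H) (a b : B), act f (a + b) = act f a + act f b)
    (hmaU : ∀ (j i0 : Fin nU) (x y : B),
      act (u j i0) (x * y) = ∑ i, act (u j i) x * act (u i i0) y)
    (hmaV : ∀ (j i0 : Fin nV) (x y : B),
      act (v j i0) (x * y) = ∑ i, act (v j i) x * act (v i i0) y)
    (z : Fin nW → B) (y : Fin nV → B) (x : Fin nU → B)
    (i : Fin nU) (j : Fin nV) (k : Fin nW) :
    -- S_{U⊗V,W} (z ⊗_B S_{U,V}(y ⊗_B x)) …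
    (∑ i1, ∑ j1, act (u i i1 * v j j1) (z k) *
        (∑ i2, act (u i1 i2) (y j1) * x i2))
      -- … equals S_{U,V⊗W} (S_{V,W}(z ⊗_B y) ⊗_B x):
      = ∑ i1, act (u i i1) (∑ j1, act (v j j1) (z k) * y j1) * x i1 := by
  have hsum : ∀ (f : H) (g : Fin nV → B),
      act f (∑ j1, g j1) = ∑ j1, act f (g j1) := by
    have key : ∀ (s : Finset (Fin nV)), s.Nonempty → ∀ (f : H) (g : Fin nV → B),
        act f (∑ j1 ∈ s, g j1) = ∑ j1 ∈ s, act f (g j1) := by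
      intro s hs
      induction hs using Finset.Nonempty.cons_induction with
      | singleton a => simp
      | cons a s ha hs ih =>
        intro f g
        rw [Finset.sum_cons, Finset.sum_cons, hadd, ih]
    exact key Finset.univ ⟨j, Finset.mem_univ j⟩
  calc (∑ i1, ∑ j1, act (u i i1 * v j j1) (z k) *
        (∑ i2, act (u i1 i2) (y j1) * x i2))
      = ∑ i2, ∑ j1, ∑ i1, act (u i i1 * v j j1) (z k) *
          (act (u i1 i2) (y j1) * x i2) := by
        simp only [Finset.mul_sum]
        exact sum_rotate3 _
    _ = ∑ i2, act (u i i2) (∑ j1, act (v j j1) (z k) * y j1) * x i2 := by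
        refine Finset.sum_congr rfl fun i2 _ => ?_
        rw [hsum, Finset.sum_mul]
        refine Finset.sum_congr rfl fun j1 _ => ?_
        rw [hmaU, Finset.sum_mul]
        refine Finset.sum_congr rfl fun i1 _ => ?_
        rw [hmod, mul_assoc]
end

section
/- Let C be a strict monoidal category and (M, m, σ) a centrally pointed C-bimodule category. Let M̃ be the bimodule category obtained by trivializing the central structure: its objects are objects of C (and formal subobjects), its morphism sets are M̃(V, W) = M(m ◁ V, m ◁ W), the right action of φ ∈ C(X,Y) is given by T ◁ φ = T ◁ φ, and the left action φ ▷ T is computed via σ. Then the functor F_σ: M̃ → M given by V ↦ m ◁ V on objects and the tautological map on morphisms, with ₂(F_σ) = σ_V ⊗ id_W, is a well-defined bimodule functor, i.e., ₂(F_σ) is natural and satisfies the coherence condition for ₂(F_σ)_{U⊗V,W}, which follows from σ_{U⊗V} = (σ_U ◁ id_V)(id_U ▷ σ_V). -/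
open CategoryTheory

universe w v u

/-- A strict bimodule category over a strict monoidal category `C`
(strictness is encoded by a `Monoid` structure on the objects of `C`).
`actL`/`actR` are the actions on objects, `wL`/`wR` the whiskerings of
`C`-objects with `M`-morphisms, and `wLC`/`wRC` the whiskerings of
`C`-morphisms with `M`-objects.  The fields `hL, hR, hLR, hL1, hR1` express
strict associativity and unitality, and the remaining fields functoriality
and compatibility of the whiskerings. -/
structure StrictBimod (C : Type u) [Category.{w} C] [Monoid C]
    (M : Type v) [Category.{w} M] where
  actL : C → M → M
  actR : M → C → M
  wL : ∀ (U : C) {X Y : M}, (X ⟶ Y) → (actL U X ⟶ actL U Y)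
  wR : ∀ {X Y : M}, (X ⟶ Y) → ∀ V : C, (actR X V ⟶ actR Y V)
  wLC : ∀ {U V : C}, (U ⟶ V) → ∀ X : M, (actL U X ⟶ actL V X)
  wRC : ∀ (X : M) {U V : C}, (U ⟶ V) → (actR X U ⟶ actR X V)
  hL : ∀ (U V : C) (X : M), actL (U * V) X = actL U (actL V X)
  hR : ∀ (X : M) (U V : C), actR X (U * V) = actR (actR X U) V
  hLR : ∀ (U : C) (X : M) (V : C), actL U (actR X V) = actR (actL U X) V
  hL1 : ∀ X : M, actL 1 X = X
  hR1 : ∀ X : M, actR X 1 = X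
  wL_id : ∀ (U : C) (X : M), wL U (𝟙 X) = 𝟙 (actL U X)
  wL_comp : ∀ (U : C) {X Y Z : M} (f : X ⟶ Y) (g : Y ⟶ Z),
    wL U (f ≫ g) = wL U f ≫ wL U g
  wR_id : ∀ (X : M) (V : C), wR (𝟙 X) V = 𝟙 (actR X V)
  wR_comp : ∀ {X Y Z : M} (f : X ⟶ Y) (g : Y ⟶ Z) (V : C),
    wR (f ≫ g) V = wR f V ≫ wR g V
  wLC_id : ∀ (U : C) (X : M), wLC (𝟙 U) X = 𝟙 (actL U X)
  wLC_comp : ∀ {U V W : C} (f : U ⟶ V) (g : V ⟶ W) (X : M),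
    wLC (f ≫ g) X = wLC f X ≫ wLC g X
  wRC_id : ∀ (X : M) (U : C), wRC X (𝟙 U) = 𝟙 (actR X U)
  wRC_comp : ∀ (X : M) {U V W : C} (f : U ⟶ V) (g : V ⟶ W),
    wRC X (f ≫ g) = wRC X f ≫ wRC X g
  wL_mul : ∀ (U V : C) {X Y : M} (f : X ⟶ Y),
    wL (U * V) f = eqToHom (hL U V X) ≫ wL U (wL V f) ≫ eqToHom (hL U V Y).symm
  wR_mul : ∀ {X Y : M} (f : X ⟶ Y) (U V : C),
    wR f (U * V) = eqToHom (hR X U V) ≫ wR (wR f U) V ≫ eqToHom (hR Y U V).symm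
  exch : ∀ (U : C) {X Y : M} (f : X ⟶ Y) (V : C),
    wL U (wR f V) = eqToHom (hLR U X V) ≫ wR (wL U f) V ≫ eqToHom (hLR U Y V).symm

/-- A central object `pt` of a strict `C`-bimodule category: a family of
isomorphisms `σ_U : U ▷ pt ≅ pt ◁ U`, natural in `U` and satisfying the
half-braiding condition `σ_{U⊗V} = (σ_U ◁ id_V)(id_U ▷ σ_V)`. -/
structure CentralObj {C : Type u} [Category.{w} C] [Monoid C]
    {M : Type v} [Category.{w} M] (B : StrictBimod C M) where
  pt : M
  σ : ∀ U : C, B.actL U pt ≅ B.actR pt U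
  natur : ∀ {U V : C} (f : U ⟶ V),
    B.wLC f pt ≫ (σ V).hom = (σ U).hom ≫ B.wRC pt f
  central : ∀ U V : C,
    (σ (U * V)).hom = eqToHom (B.hL U V pt) ≫ B.wL U (σ V).hom ≫
      eqToHom (B.hLR U pt V) ≫ B.wR (σ U).hom V ≫ eqToHom (B.hR pt U V).symm

/-- The map `Σ_{U;V,W}(T) = (σ_U ◁ id_W)(id_U ▷ T)(σ_U⁻¹ ◁ id_V)` from
`M(m ◁ V, m ◁ W)` to `M(m ◁ (U⊗V), m ◁ (U⊗W))` induced by a central object. -/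
def CentralObj.Sig {C : Type u} [Category.{w} C] [Monoid C]
    {M : Type v} [Category.{w} M] {B : StrictBimod C M} (c : CentralObj B)
    (U V W : C) (T : B.actR c.pt V ⟶ B.actR c.pt W) :
    B.actR c.pt (U * V) ⟶ B.actR c.pt (U * W) :=
  eqToHom (B.hR c.pt U V) ≫ B.wR (c.σ U).inv V ≫
    eqToHom (B.hLR U c.pt V).symm ≫ B.wL U T ≫ eqToHom (B.hLR U c.pt W) ≫
    B.wR (c.σ U).hom W ≫ eqToHom (B.hR c.pt U W).symm

lemma wR_eqToHom {C : Type u} [Category.{w} C] [Monoid C]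
    {M : Type v} [Category.{w} M] (B : StrictBimod C M) {X Y : M} (h : X = Y)
    (V : C) : B.wR (eqToHom h) V = eqToHom (by rw [h]) := by
  cases h; simp [B.wR_id]

lemma wL_eqToHom {C : Type u} [Category.{w} C] [Monoid C]
    {M : Type v} [Category.{w} M] (B : StrictBimod C M) (U : C) {X Y : M}
    (h : X = Y) : B.wL U (eqToHom h) = eqToHom (by rw [h]) := by
  cases h; simp [B.wL_id]

/-- Trivialization of the central structure:  the
trivialized category `M̃` has the objects of `C` and morphisms
`M̃(V,W) = M(m ◁ V, m ◁ W)`, with the left action of `U` on morphisms given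
by conjugation with `σ` (the map `Σ_{U;V,W}` = `CentralObj.Sig`).  The functor
`F_σ : M̃ → M`, `V ↦ m ◁ V`, tautological on morphisms, with
`₂(F_σ)_{U,V} = σ_U ◁ id_V`, is a well-defined bimodule functor: `₂(F_σ)` is
natural with respect to the morphisms of `M̃` and satisfies the coherence
condition, which follows from `σ_{U⊗V} = (σ_U ◁ id_V)(id_U ▷ σ_V)`. -/
theorem stmt_19 {C : Type u} [Category.{w} C] [Monoid C]
    {M : Type v} [Category.{w} M] (B : StrictBimod C M) (c : CentralObj B) :
    let twoF : ∀ U V : C, B.actL U (B.actR c.pt V) ⟶ B.actR c.pt (U * V) :=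
      fun U V => eqToHom (B.hLR U c.pt V) ≫ B.wR (c.σ U).hom V ≫
        eqToHom (B.hR c.pt U V).symm
    -- naturality of ₂(F_σ) in morphisms T of the trivialized category M̃
    -- (F_σ(U ▷ T) being Σ_{U;V,W}(T)):
    (∀ (U V W : C) (T : B.actR c.pt V ⟶ B.actR c.pt W),
       B.wL U T ≫ twoF U W = twoF U V ≫ c.Sig U V W T) ∧
    -- coherence of ₂(F_σ) with the associativity of the actions:
    (∀ U V W : C,
      twoF (U * V) W =
        eqToHom (B.hL U V (B.actR c.pt W)) ≫ B.wL U (twoF V W) ≫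
          twoF U (V * W) ≫
          eqToHom (congrArg (B.actR c.pt) (mul_assoc U V W)).symm) := by
  intro twoF
  constructor
  · intro U V W T
    simp only [twoF, CentralObj.Sig, Category.assoc, eqToHom_trans,
      eqToHom_trans_assoc, eqToHom_refl, Category.id_comp]
    rw [← Category.assoc (B.wR (c.σ U).hom V), ← B.wR_comp,
      Iso.hom_inv_id, B.wR_id]
    simp
  · intro U V W
    simp only [twoF, c.central, B.wR_comp, B.wL_comp, wR_eqToHom, wL_eqToHom,
      B.exch, B.wR_mul, Category.assoc, eqToHom_trans, eqToHom_trans_assoc,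
      eqToHom_refl, Category.id_comp, Category.comp_id]
end
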